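/- arXiv:0802.2109 — 9 statements merged into one kernel-verified Lean document; each statement's English description precedes it below -/
import Mathlib

section
/- Every integer matrix R with odd determinant is congruent modulo 2 to some matrix R̃ in GL(n,ℤ) with det R̃ = 1. -/
open Matrix

private def liftTS (n : ℕ) (t : TransvectionStruct (Fin n) (ZMod 2)) :
    TransvectionStruct (Fin n) ℤ :=
  ⟨t.i, t.j, t.hij, (t.c.val : ℤ)⟩

private lemma liftTS_map (n : ℕ) (t : TransvectionStruct (Fin n) (ZMod 2)) :
    ((liftTS n t).toMatrix).map (Int.cast : ℤ → ZMod 2) = t.toMatrix := by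
  ext a b
  simp only [TransvectionStruct.toMatrix, liftTS, Matrix.transvection, Matrix.map_apply,
    Matrix.add_apply, Matrix.one_apply, Matrix.single, Matrix.of_apply]
  split_ifs <;> simp_all [ZMod.natCast_val, ZMod.intCast_cast, ZMod.intCast_zmod_cast]

private lemma det_prod_liftTS (n : ℕ) (L : List (TransvectionStruct (Fin n) ℤ)) :
    (L.map TransvectionStruct.toMatrix).prod.det = 1 := by
  induction L with
  | nil => simp
  | cons t L ih => simp [Matrix.det_mul, ih, TransvectionStruct.det]

/-- Every integer matrix `R` with odd determinant is congruent modulo 2 to some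
integer matrix `R̃` with `det R̃ = 1` (in particular `R̃ ∈ GL(n, ℤ)`). -/
theorem exists_det_one_congruent_mod_two (n : ℕ) (R : Matrix (Fin n) (Fin n) ℤ)
    (hodd : Odd R.det) :
    ∃ R' : Matrix (Fin n) (Fin n) ℤ, R'.det = 1 ∧
      R'.map (Int.cast : ℤ → ZMod 2) = R.map (Int.cast : ℤ → ZMod 2) := by
  set f : ℤ →+* ZMod 2 := Int.castRingHom (ZMod 2) with hf
  set M : Matrix (Fin n) (Fin n) (ZMod 2) := R.map f with hM
  have hdetM : M.det = 1 := by
    obtain ⟨k, hk⟩ := hodd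
    have : M.det = f R.det := (RingHom.map_det f R).symm
    have h2 : (2 : ZMod 2) = 0 := by decide
    rw [this, hk]
    show ((2 * k + 1 : ℤ) : ZMod 2) = 1
    push_cast
    rw [h2]
    ring
  obtain ⟨L, L', D, hdecomp⟩ := Matrix.Pivot.exists_list_transvec_mul_diagonal_mul_list_transvec M
  -- the diagonal part is 1
  have hdetD : (Matrix.diagonal D).det = 1 := by
    have h1 : M.det = (L.map TransvectionStruct.toMatrix).prod.det *
        (Matrix.diagonal D).det * (L'.map TransvectionStruct.toMatrix).prod.det := by
      rw [hdecomp, Matrix.det_mul, Matrix.det_mul]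
    rwa [Matrix.TransvectionStruct.det_toMatrix_prod, Matrix.TransvectionStruct.det_toMatrix_prod,
      one_mul, mul_one, hdetM, eq_comm] at h1
  have hD1 : Matrix.diagonal D = 1 := by
    rw [Matrix.det_diagonal] at hdetD
    have hall : ∀ i, D i = 1 := by
      intro i
      have hne : D i ≠ 0 := by
        intro h0
        rw [Finset.prod_eq_zero (Finset.mem_univ i) h0] at hdetD
        exact zero_ne_one hdetD
      revert hne
      generalize D i = a
      revert a
      decide
    rw [show D = fun _ => 1 from funext hall]
    simp [Matrix.diagonal_one]
  have hMprod : M = ((L ++ L').map TransvectionStruct.toMatrix).prod := by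
    rw [hdecomp, hD1, mul_one, List.map_append, List.prod_append]
  refine ⟨(((L ++ L').map (liftTS n)).map TransvectionStruct.toMatrix).prod, ?_, ?_⟩
  · exact det_prod_liftTS n _
  · have hRM : R.map (Int.cast : ℤ → ZMod 2) = M := rfl
    rw [hRM, hMprod]
    have : ∀ (T : List (TransvectionStruct (Fin n) (ZMod 2))),
        ((T.map (liftTS n)).map TransvectionStruct.toMatrix).prod.map (Int.cast : ℤ → ZMod 2)
          = (T.map TransvectionStruct.toMatrix).prod := by
      intro T
      induction T with
      | nil => simp [Matrix.map_one]
      | cons t T ih =>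
        simp only [List.map_cons, List.prod_cons]
        rw [show ∀ (A B : Matrix (Fin n) (Fin n) ℤ), (A * B).map (Int.cast : ℤ → ZMod 2)
            = A.map (Int.cast : ℤ → ZMod 2) * B.map (Int.cast : ℤ → ZMod 2) from
          fun A B => Matrix.map_mul (f := f), ih, liftTS_map]
    exact this (L ++ L')
end

section
/- The 2×2 symmetric integer matrix [[4,1],[1,4]] does not represent a bilinear form of half-integer surgery type, i.e., there is no basis change making it of half-integer surgery type. -/
open Matrix

/-- A rank-2 symmetric integer matrix `A` is of half-integer surgery type if some
change of basis `P ∈ GL(2, ℤ)` puts it in the form `[[2, 1], [1, *]]`. -/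
def IsHalfIntSurgeryType (A : Matrix (Fin 2) (Fin 2) ℤ) : Prop :=
  ∃ P : Matrix (Fin 2) (Fin 2) ℤ, IsUnit P.det ∧
    (Pᵀ * A * P) 0 0 = 2 ∧ (Pᵀ * A * P) 0 1 = 1 ∧ (Pᵀ * A * P) 1 0 = 1

/-- The form `[[4, 1], [1, 4]]` is not of half-integer surgery type. -/
theorem matrix_4114_not_halfIntSurgeryType :
    ¬ IsHalfIntSurgeryType !![4, 1; 1, 4] := by
  rintro ⟨P, -, h, -, -⟩
  simp only [Matrix.mul_apply, Fin.sum_univ_two, Matrix.transpose_apply,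
    Matrix.cons_val', Matrix.cons_val_zero, Matrix.cons_val_one, Matrix.head_cons,
    Matrix.empty_val', Matrix.cons_val_fin_one, Matrix.head_fin_const] at h
  norm_num at h
  set a := P 0 0
  set c := P 1 0
  have h1 : 3 * a ^ 2 + 3 * c ^ 2 ≤ 2 := by nlinarith [sq_nonneg (a + c)]
  have h2 := sq_nonneg a
  have h3 := sq_nonneg c
  obtain ⟨x, hx⟩ : ∃ x : ℤ, a ^ 2 = x := ⟨_, rfl⟩
  obtain ⟨y, hy⟩ : ∃ y : ℤ, c ^ 2 = y := ⟨_, rfl⟩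
  rw [hx, hy] at h1
  rw [hx] at h2
  rw [hy] at h3
  have hx0 : x = 0 := by omega
  have hy0 : y = 0 := by omega
  have ha : a = 0 := (pow_eq_zero_iff (two_ne_zero)).mp (hx.trans hx0)
  have hc : c = 0 := (pow_eq_zero_iff (two_ne_zero)).mp (hy.trans hy0)
  rw [ha, hc] at h
  norm_num at h
end

section
/- Let Q be a symmetric bilinear form of half-integer surgery type of rank 2r with basis x_1,…,x_r,y_1,…,y_r satisfying Q(x_i,x_j)=2δ_{ij}, Q(x_i,y_j)=δ_{ij}, and set m_i = Q(y_i,y_i). Then det Q ≡ ∏_{i=1}^r (2m_i − 1) (mod 4). -/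
open Matrix

/-- If `Q` is the Gram matrix of a symmetric form of half-integer surgery type of rank `2r`,
in a basis `x_1, …, x_r, y_1, …, y_r` with `Q(x_i, x_j) = 2δ_{ij}` and `Q(x_i, y_j) = δ_{ij}`,
and `m_i = Q(y_i, y_i)`, then `det Q ≡ ∏_{i=1}^r (2 m_i − 1) (mod 4)`. -/
theorem det_halfIntSurgeryType_mod_four (r : ℕ)
    (Q : Matrix (Fin r ⊕ Fin r) (Fin r ⊕ Fin r) ℤ)
    (hsym : Qᵀ = Q)
    (hxx : ∀ i j, Q (Sum.inl i) (Sum.inl j) = if i = j then 2 else 0)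
    (hxy : ∀ i j, Q (Sum.inl i) (Sum.inr j) = if i = j then 1 else 0) :
    Q.det ≡ ∏ i : Fin r, (2 * Q (Sum.inr i) (Sum.inr i) - 1) [ZMOD 4] := by
  classical
  have hyx : ∀ i j, Q (Sum.inr i) (Sum.inl j) = if i = j then 1 else 0 := by
    intro i j
    have := congrFun (congrFun hsym (Sum.inr i)) (Sum.inl j)
    rw [transpose_apply] at this
    rw [← this, hxy]; simp [eq_comm]
  set M : Matrix (Fin r) (Fin r) ℤ :=
    Matrix.of (fun i j => 2 * Q (Sum.inr i) (Sum.inr j) - if i = j then 1 else 0) with hM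
  set D : Matrix (Fin r) (Fin r) ℚ :=
    Matrix.of (fun i j => ((Q (Sum.inr i) (Sum.inr j) : ℤ) : ℚ)) with hD
  have h1 : Q.map (Int.cast : ℤ → ℚ) = fromBlocks ((2:ℚ) • 1) 1 1 D := by
    ext i j
    cases i <;> cases j <;>
      simp [Matrix.map_apply, hxx, hxy, hyx, hD, Matrix.one_apply, apply_ite]
  haveI : Invertible ((2:ℚ) • (1 : Matrix (Fin r) (Fin r) ℚ)) := by
    apply Matrix.invertibleOfIsUnitDet
    rw [det_smul, det_one, mul_one]
    exact (isUnit_iff_ne_zero).mpr (by positivity)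
  have h2 : (Q.map (Int.cast : ℤ → ℚ)).det = (M.map (Int.cast : ℤ → ℚ)).det := by
    rw [h1, det_fromBlocks₁₁, ← det_mul]
    congr 1
    rw [Matrix.one_mul, Matrix.mul_one, Matrix.mul_sub, mul_invOf_self, smul_mul_assoc,
      Matrix.one_mul]
    ext i j
    simp only [hM, hD, Matrix.map_apply, Matrix.sub_apply, Matrix.smul_apply, Matrix.of_apply,
      Matrix.one_apply, smul_eq_mul]
    split_ifs <;> push_cast <;> ring
  have hdet : Q.det = M.det := by
    have h3 : ((Q.det : ℤ) : ℚ) = ((M.det : ℤ) : ℚ) := by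
      rw [show ((Int.cast : ℤ → ℚ) = (Int.castRingHom ℚ)) from rfl] at h2 ⊢
      rw [RingHom.map_det, RingHom.map_det]
      exact h2
    exact_mod_cast h3
  rw [hdet, Int.modEq_iff_dvd]
  have hdiag : ∏ i : Fin r, (2 * Q (Sum.inr i) (Sum.inr i) - 1) = ∏ i, M i i := by
    simp [hM]
  rw [hdiag]
  have hsplit : (∏ i, M i i) - M.det
      = - ∑ σ ∈ Finset.univ.erase (1 : Equiv.Perm (Fin r)),
          Equiv.Perm.sign σ • ∏ i, M (σ i) i := by
    rw [det_apply', ← Finset.sum_erase_add _ _ (Finset.mem_univ (1 : Equiv.Perm (Fin r)))]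
    simp [Units.smul_def]
  rw [hsplit, dvd_neg]
  apply Finset.dvd_sum
  intro σ hσ
  have hσ1 : σ ≠ 1 := (Finset.mem_erase.mp hσ).1
  obtain ⟨i, hi⟩ : ∃ i, σ i ≠ i := by
    by_contra h; push_neg at h; exact hσ1 (Equiv.ext h)
  have hj : σ (σ i) ≠ σ i := fun h => hi (σ.injective h)
  have h4 : (4 : ℤ) ∣ ∏ k, M (σ k) k := by
    have hmem : σ i ∈ (Finset.univ : Finset (Fin r)).erase i :=
      Finset.mem_erase.mpr ⟨hi, Finset.mem_univ _⟩
    rw [← Finset.mul_prod_erase _ _ (Finset.mem_univ i),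
        ← Finset.mul_prod_erase _ _ hmem]
    have e1 : (2 : ℤ) ∣ M (σ i) i := by simp [hM, hi]
    have e2 : (2 : ℤ) ∣ M (σ (σ i)) (σ i) := by simp [hM, hj]
    have : (4 : ℤ) = 2 * 2 := by norm_num
    rw [this]
    exact mul_dvd_mul e1 (e2.mul_right _)
  rw [Units.smul_def]
  exact h4.mul_left _
end

section
/- The determinant of a symmetric integer matrix of half-integer surgery type is odd. -/
open Matrix

/-- The determinant of a symmetric integer matrix of half-integer surgery type is odd. -/
theorem det_halfIntSurgeryType_odd (r : ℕ)
    (Q : Matrix (Fin r ⊕ Fin r) (Fin r ⊕ Fin r) ℤ)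
    (hsym : Qᵀ = Q)
    (hxx : ∀ i j, Q (Sum.inl i) (Sum.inl j) = if i = j then 2 else 0)
    (hxy : ∀ i j, Q (Sum.inl i) (Sum.inr j) = if i = j then 1 else 0) :
    Odd Q.det := by
  have hyx : ∀ i j, Q (Sum.inr i) (Sum.inl j) = if i = j then 1 else 0 := by
    intro i j
    have := congrFun (congrFun hsym (Sum.inr i)) (Sum.inl j)
    rw [Matrix.transpose_apply] at this
    rw [← this, hxy]
    simp [eq_comm]
  rw [← Int.not_even_iff_odd]
  intro hev
  replace hev : ((Q.det : ℤ) : ZMod 2) = 0 :=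
    (ZMod.intCast_zmod_eq_zero_iff_dvd _ 2).mpr hev.two_dvd
  set f : ℤ →+* ZMod 2 := Int.castRingHom (ZMod 2)
  have hdet : ((Q.det : ℤ) : ZMod 2) = (Q.map f).det := by simpa using RingHom.map_det f Q
  set Y : Matrix (Fin r) (Fin r) (ZMod 2) := fun i j => f (Q (Sum.inr i) (Sum.inr j)) with hY
  have hQm : Q.map f =
      (Matrix.fromBlocks 1 0 Y 1).submatrix id (Equiv.sumComm (Fin r) (Fin r)) := by
    ext a b
    cases a <;> cases b <;>
      simp [Matrix.map_apply, Matrix.submatrix_apply, hxx, hxy, hyx, hY,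
        Matrix.fromBlocks_apply₁₁, Matrix.fromBlocks_apply₁₂,
        Matrix.fromBlocks_apply₂₁, Matrix.fromBlocks_apply₂₂, Matrix.one_apply,
        apply_ite f]
    all_goals simp only [Matrix.fromBlocks, Matrix.of_apply, Sum.elim_inl, Sum.elim_inr,
      Matrix.one_apply, Matrix.zero_apply]
    all_goals intros
    all_goals (split_ifs <;> decide)
  rw [hdet, hQm, Matrix.det_permute', Matrix.det_fromBlocks_zero₁₂] at hev
  simp only [Matrix.det_one, mul_one, one_mul] at hev
  rcases Int.units_eq_one_or (Equiv.Perm.sign (Equiv.sumComm (Fin r) (Fin r))) with h | h <;>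
    rw [h] at hev <;> simp at hev
end

section
/- Let Q be a 2r×2r symmetric integer matrix in block form [[2I, B],[Bᵀ, C]] whose reduction mod 2 equals [[0, I],[I, X̄]] for some symmetric X̄ over ℤ/2 (i.e., Q ≡ [[2I,I],[I,X]] mod 2). Then there exists P = [[I, S],[0, R]] ∈ GL(2r,ℤ) such that PᵀQP = [[2I, I],[I, X']] with X' ≡ X (mod 2). -/
open Matrix

section Aux

variable {r : ℕ}

private lemma two_smul_eq_two_mul (A : Matrix (Fin r) (Fin r) ℤ) :
    (2 : ℤ) • A = 2 * A := by
  rw [two_smul]; exact (two_mul A).symm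

end Aux

/-- If `Q` is a symmetric integer matrix in block form `[[2I, B], [Bᵀ, C]]` which is
congruent mod 2 to `[[2I, I], [I, X]]`, then there is `P = [[I, S], [0, R]] ∈ GL(2r, ℤ)`
with `Pᵀ Q P = [[2I, I], [I, X']]` and `X' ≡ X (mod 2)`. -/
theorem block_basis_change_to_halfIntSurgery (r : ℕ)
    (Q : Matrix (Fin r ⊕ Fin r) (Fin r ⊕ Fin r) ℤ)
    (hsym : Qᵀ = Q)
    (htl : ∀ i j, Q (Sum.inl i) (Sum.inl j) = if i = j then 2 else 0)
    (X : Matrix (Fin r) (Fin r) ℤ)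
    (hmod : Q.map (Int.cast : ℤ → ZMod 2) =
      (Matrix.fromBlocks ((2 : ℤ) • (1 : Matrix (Fin r) (Fin r) ℤ)) (1 : Matrix (Fin r) (Fin r) ℤ) (1 : Matrix (Fin r) (Fin r) ℤ) X).map (Int.cast : ℤ → ZMod 2)) :
    ∃ (S R X' : Matrix (Fin r) (Fin r) ℤ),
      IsUnit (Matrix.fromBlocks 1 S 0 R).det ∧
      (Matrix.fromBlocks 1 S 0 R)ᵀ * Q * (Matrix.fromBlocks 1 S 0 R) =
        Matrix.fromBlocks ((2 : ℤ) • (1 : Matrix (Fin r) (Fin r) ℤ)) (1 : Matrix (Fin r) (Fin r) ℤ) (1 : Matrix (Fin r) (Fin r) ℤ) X' ∧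
      X'.map (Int.cast : ℤ → ZMod 2) = X.map (Int.cast : ℤ → ZMod 2) := by
  classical
  set B : Matrix (Fin r) (Fin r) ℤ := Q.toBlocks₁₂ with hBdef
  set C : Matrix (Fin r) (Fin r) ℤ := Q.toBlocks₂₂ with hCdef
  -- B ≡ 1 mod 2 entrywise
  have hdvd : ∀ i j, (2 : ℤ) ∣ (B i j - if i = j then 1 else 0) := by
    intro i j
    have h := congrFun (congrFun hmod (Sum.inl i)) (Sum.inr j)
    rw [Matrix.map_apply, Matrix.map_apply, Matrix.fromBlocks_apply₁₂] at h
    apply (ZMod.intCast_zmod_eq_zero_iff_dvd _ 2).mp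
    rw [Int.cast_sub]
    have hb : ((B i j : ℤ) : ZMod 2) = (((1 : Matrix (Fin r) (Fin r) ℤ) i j : ℤ) : ZMod 2) := h
    rw [hb, Matrix.one_apply]
    split <;> simp
  -- the "half" matrix M with B = 1 + 2M
  set M : Matrix (Fin r) (Fin r) ℤ :=
    Matrix.of (fun i j => (B i j - if i = j then 1 else 0) / 2) with hMdef
  have hM : B = 1 + (2 : ℤ) • M := by
    ext i j
    have h2 := Int.mul_ediv_cancel' (hdvd i j)
    simp only [Matrix.add_apply, Matrix.one_apply, Matrix.smul_apply, hMdef,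
      Matrix.of_apply, smul_eq_mul]
    omega
  set N : Matrix (Fin r) (Fin r) ℤ :=
    Matrix.of (fun i j => if i < j then M i j + M j i else 0) with hNdef
  set R : Matrix (Fin r) (Fin r) ℤ := 1 + (2 : ℤ) • N with hRdef
  set S : Matrix (Fin r) (Fin r) ℤ := -(M + N + (2 : ℤ) • (M * N)) with hSdef
  -- key identity for the off-diagonal block
  have hkey : (2 : ℤ) • (1 : Matrix (Fin r) (Fin r) ℤ) * S + B * R = 1 := by
    rw [hM, hRdef, hSdef]
    simp only [two_smul_eq_two_mul]
    noncomm_ring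
  have hkeyT : Sᵀ * ((2 : ℤ) • (1 : Matrix (Fin r) (Fin r) ℤ)) + Rᵀ * Bᵀ = 1 := by
    have h := congrArg Matrix.transpose hkey
    simpa [Matrix.transpose_add, Matrix.transpose_mul, Matrix.transpose_smul,
      Matrix.transpose_one] using h
  -- Q as a block matrix
  have h11 : Q.toBlocks₁₁ = (2 : ℤ) • (1 : Matrix (Fin r) (Fin r) ℤ) := by
    ext i j
    simp only [Matrix.toBlocks₁₁, Matrix.of_apply, Matrix.smul_apply, Matrix.one_apply,
      smul_eq_mul]
    rw [htl i j]
    split <;> simp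
  have h21 : Q.toBlocks₂₁ = Bᵀ := by
    ext i j
    simp only [Matrix.toBlocks₂₁, Matrix.of_apply, Matrix.transpose_apply, hBdef,
      Matrix.toBlocks₁₂]
    exact (congrFun (congrFun hsym (Sum.inr i)) (Sum.inl j)).symm
  have hQ : Q = Matrix.fromBlocks ((2 : ℤ) • 1) B Bᵀ C := by
    conv_lhs => rw [← Matrix.fromBlocks_toBlocks Q]
    rw [h11, h21, ← hBdef, ← hCdef]
  refine ⟨S, R,
    (Sᵀ * ((2 : ℤ) • 1) + Rᵀ * Bᵀ) * S + (Sᵀ * B + Rᵀ * C) * R, ?_, ?_, ?_⟩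
  · -- determinant
    rw [Matrix.det_fromBlocks_zero₂₁]
    have hRtri : R.BlockTriangular id := by
      intro i j hij
      have h1 : ¬ i < j := not_lt_of_gt hij
      have h2 : i ≠ j := ne_of_gt hij
      simp [hRdef, hNdef, Matrix.add_apply, Matrix.one_apply, Matrix.smul_apply, h1, h2]
    rw [Matrix.det_of_upperTriangular hRtri]
    have hdiag : ∀ i, R i i = 1 := by
      intro i
      simp [hRdef, hNdef, Matrix.add_apply, Matrix.one_apply, Matrix.smul_apply]
    simp [hdiag]
  · -- the block computation
    rw [hQ, Matrix.fromBlocks_transpose, Matrix.transpose_one, Matrix.transpose_zero,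
      Matrix.fromBlocks_multiply, Matrix.fromBlocks_multiply]
    simp only [Matrix.one_mul, Matrix.zero_mul, Matrix.mul_one, Matrix.mul_zero,
      add_zero, zero_add]
    rw [hkey, hkeyT]
  · -- mod 2 congruence of the lower-right block
    set f : Matrix (Fin r) (Fin r) ℤ →+* Matrix (Fin r) (Fin r) (ZMod 2) :=
      (Int.castRingHom (ZMod 2)).mapMatrix with hfdef
    have h2z : (2 : ZMod 2) = 0 := rfl
    have hfCX : f C = f X := by
      ext i j
      have h := congrFun (congrFun hmod (Sum.inr i)) (Sum.inr j)
      rw [Matrix.map_apply, Matrix.map_apply, Matrix.fromBlocks_apply₂₂] at h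
      exact h
    have hftrans : ∀ A : Matrix (Fin r) (Fin r) ℤ, f Aᵀ = (f A)ᵀ := fun A => by
      simp [hfdef, RingHom.mapMatrix_apply, Matrix.transpose_map]
    have hf2 : ∀ A : Matrix (Fin r) (Fin r) ℤ, f ((2:ℤ) • A) = 0 := fun A => by
      ext i j
      simp only [hfdef, RingHom.mapMatrix_apply, Matrix.map_apply, Matrix.smul_apply,
        smul_eq_mul, Matrix.zero_apply]
      rw [_root_.map_mul]
      have h2 : (Int.castRingHom (ZMod 2)) 2 = 0 := by decide
      rw [h2, zero_mul]
    have hfB : f B = 1 := by rw [hM, map_add, _root_.map_one, hf2, add_zero]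
    have hfR : f R = 1 := by rw [hRdef, map_add, _root_.map_one, hf2, add_zero]
    have hfS : f S = -(f M + f N) := by
      rw [hSdef, map_neg, map_add, map_add, hf2, add_zero]
    have hMN : f M + f N + ((f M)ᵀ + (f N)ᵀ) = 0 := by
      ext i j
      simp only [Matrix.add_apply, Matrix.transpose_apply, Matrix.zero_apply, hfdef,
        RingHom.mapMatrix_apply, Matrix.map_apply, hNdef, Matrix.of_apply,
        Int.coe_castRingHom]
      rcases lt_trichotomy i j with h | h | h
      · rw [if_pos h, if_neg (not_lt_of_gt h)]
        push_cast
        linear_combination ((M i j : ZMod 2) + (M j i : ZMod 2)) * h2z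
      · subst h
        simp only [lt_irrefl, if_neg (lt_irrefl i)]
        push_cast
        linear_combination ((M i i : ZMod 2)) * h2z
      · rw [if_neg (not_lt_of_gt h), if_pos h]
        push_cast
        linear_combination ((M i j : ZMod 2) + (M j i : ZMod 2)) * h2z
    show f ((Sᵀ * ((2 : ℤ) • 1) + Rᵀ * Bᵀ) * S + (Sᵀ * B + Rᵀ * C) * R) = f X
    rw [← hfCX]
    simp only [map_add, _root_.map_mul, hftrans, hfS, hfB, hfR, hf2,
      Matrix.transpose_neg, Matrix.transpose_add, Matrix.transpose_one]
    trans f C - (f M + f N + ((f M)ᵀ + (f N)ᵀ))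
    · noncomm_ring
    · rw [hMN, sub_zero]
end

section
/- Let M be a positive-definite integer lattice of rank 2r and L ⊆ M a finite-index sublattice of odd index l. Suppose L has a basis x_1,…,x_r,y_1,…,y_r with x_i·x_j = 2δ_{ij} and x_i·y_j = δ_{ij}. Then x_1,…,x_r extends to a basis x_1,…,x_r,z_1,…,z_r of M whose Gram matrix is congruent mod 2 to the Gram matrix of L in the given basis. -/
open Matrix

lemma odd_int_cast_zmod_two {z : ℤ} (h : Odd z) : (z : ZMod 2) = 1 := by
  obtain ⟨k, rfl⟩ := h
  push_cast
  have h2 : (2 : ZMod 2) = 0 := by decide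
  rw [h2]; ring

lemma lift_mod_two {m : ℕ} (D : Matrix (Fin m) (Fin m) ℤ) (h : Odd D.det) :
    ∃ S : Matrix (Fin m) (Fin m) ℤ, IsUnit S.det ∧
      S.map (Int.cast : ℤ → ZMod 2) = D.map (Int.cast : ℤ → ZMod 2) := by
  classical
  have hdet : D.det ≠ 0 := by
    rintro h0; rw [h0] at h; simp [Int.odd_iff] at h
  have hinj : Function.Injective D.mulVecLin := by
    intro v w hvw
    have h1 : D.adjugate.mulVec (D.mulVec v) = D.adjugate.mulVec (D.mulVec w) := by
      simpa [Matrix.mulVecLin] using congrArg D.adjugate.mulVecLin hvw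
    rw [Matrix.mulVec_mulVec, Matrix.mulVec_mulVec, Matrix.adjugate_mul] at h1
    funext i
    have h2 := congrFun h1 i
    simp [Matrix.smul_mulVec] at h2
    rcases h2 with h' | h'
    · exact h'
    · exact absurd h' hdet
  set N := LinearMap.range D.mulVecLin with hN
  obtain ⟨n, snf⟩ := Submodule.smithNormalForm (Pi.basisFun ℤ (Fin m)) N
  set E := LinearEquiv.ofInjective D.mulVecLin hinj with hE
  have hnm : n = m := by
    have h1 : Module.finrank ℤ N = n := by
      simpa using Module.finrank_eq_card_basis snf.bN
    have h2 : Module.finrank ℤ N = m := by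
      rw [hN, ← E.finrank_eq]; simp
    omega
  subst hnm
  have hfbij : Function.Bijective snf.f :=
    Finite.injective_iff_bijective.mp snf.f.injective
  set σ : Fin n ≃ Fin n := Equiv.ofBijective snf.f hfbij with hσ
  have hσap : ∀ k, σ k = snf.f k := fun k => rfl
  set bD : Module.Basis (Fin n) ℤ N := (Pi.basisFun ℤ (Fin n)).map E with hbDdef
  have hbD : ∀ j i, ((bD j : N) : Fin n → ℤ) i = D i j := by
    intro j i
    rw [hbDdef, Module.Basis.map_apply, Pi.basisFun_apply]
    show D.mulVec (Pi.single j 1) i = D i j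
    rw [Matrix.mulVec_single_one]; rfl
  -- matrices
  set e := Pi.basisFun ℤ (Fin n) with he
  set BM : Matrix (Fin n) (Fin n) ℤ := e.toMatrix snf.bM with hBM
  set R : Matrix (Fin n) (Fin n) ℤ := snf.bN.toMatrix bD with hR
  set W : Matrix (Fin n) (Fin n) ℤ := R.submatrix σ.symm id with hW
  set Dg : Matrix (Fin n) (Fin n) ℤ := Matrix.diagonal (fun i => snf.a (σ.symm i)) with hDg
  have hBMunit : IsUnit BM.det := by
    apply Matrix.isUnit_det_of_left_inverse (B := snf.bM.toMatrix e)
    rw [hBM, Module.Basis.toMatrix_mul_toMatrix_flip]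
  have hRunit : IsUnit R.det := by
    have hinv : bD.toMatrix snf.bN * R = 1 := by
      rw [hR]; exact Module.Basis.toMatrix_mul_toMatrix_flip _ _
    exact IsUnit.of_mul_eq_one (a := R.det) (bD.toMatrix snf.bN).det
      (by rw [mul_comm, ← Matrix.det_mul, hinv, Matrix.det_one])
  have hWunit : IsUnit W.det := by
    rw [hW, Matrix.det_permute]
    exact ((Equiv.Perm.sign σ.symm : ℤˣ).isUnit).mul hRunit
  -- the factorization
  have hDgW : ∀ k j, (Dg * W) k j = snf.a (σ.symm k) * R (σ.symm k) j := by
    intro k j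
    rw [hDg, Matrix.diagonal_mul]
    rfl
  have key : D = BM * (Dg * W) := by
    ext i j
    rw [Matrix.mul_apply]
    calc D i j = ((bD j : N) : Fin n → ℤ) i := (hbD j i).symm
      _ = (Finset.univ.sum fun w => snf.bM.repr ((bD j : N) : Fin n → ℤ) w • snf.bM w) i := by
          rw [Module.Basis.sum_repr]
      _ = Finset.univ.sum fun w => snf.bM.repr ((bD j : N) : Fin n → ℤ) w * snf.bM w i := by
          rw [Finset.sum_apply]; simp
      _ = Finset.univ.sum fun k => BM i k * (Dg * W) k j := by
          rw [← Equiv.sum_comp σ (fun w => snf.bM.repr ((bD j : N) : Fin n → ℤ) w * snf.bM w i),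
              ← Equiv.sum_comp σ (fun k => BM i k * (Dg * W) k j)]
          apply Finset.sum_congr rfl
          intro k _
          rw [hDgW (σ k)]
          rw [Equiv.symm_apply_apply]
          have h1 : BM i (σ k) = snf.bM (σ k) i := by
            rw [hBM, Module.Basis.toMatrix_apply, he, Pi.basisFun_repr]
          have h2 : R k j = snf.bN.repr (bD j) k := by
            rw [hR, Module.Basis.toMatrix_apply]
          have h3 : snf.bM.repr ((bD j : N) : Fin n → ℤ) (σ k) =
              snf.a k * snf.bN.repr (bD j) k := by
            rw [hσap, snf.repr_apply_embedding_eq_repr_smul (bD j)]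
            simp
          rw [h1, h2, h3]
          ring
  -- determinant bookkeeping
  have hdetfact : D.det = BM.det * (Dg.det * W.det) := by
    rw [key, Matrix.det_mul, Matrix.det_mul]
  have hOddDg : Odd Dg.det := by
    rw [hdetfact] at h
    exact (Int.odd_mul.mp (Int.odd_mul.mp h).2).1
  have hDgcast : ∀ i, ((snf.a (σ.symm i) : ℤ) : ZMod 2) = 1 := by
    have hDgdet : ((Dg.det : ℤ) : ZMod 2) = 1 := odd_int_cast_zmod_two hOddDg
    intro i0
    by_contra hne
    have h0 : ((snf.a (σ.symm i0) : ℤ) : ZMod 2) = 0 := by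
      have hx : ∀ x : ZMod 2, x = 0 ∨ x = 1 := by decide
      rcases hx ((snf.a (σ.symm i0) : ℤ) : ZMod 2) with h' | h'
      · exact h'
      · exact absurd h' hne
    have hz : ((Dg.det : ℤ) : ZMod 2) = 0 := by
      rw [hDg, Matrix.det_diagonal]
      push_cast
      exact Finset.prod_eq_zero (Finset.mem_univ i0) h0
    rw [hz] at hDgdet
    exact absurd hDgdet (by decide)
  have hDgmap : Dg.map (Int.cast : ℤ → ZMod 2) = 1 := by
    rw [hDg, Matrix.diagonal_map (by simp)]
    rw [show (fun i => ((snf.a (σ.symm i) : ℤ) : ZMod 2)) = fun _ => (1 : ZMod 2) from funext hDgcast]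
    exact Matrix.diagonal_one
  refine ⟨BM * W, ?_, ?_⟩
  · rw [Matrix.det_mul]; exact hBMunit.mul hWunit
  · have hmap : ∀ (M1 M2 : Matrix (Fin n) (Fin n) ℤ),
        (M1 * M2).map (Int.cast : ℤ → ZMod 2) =
          M1.map (Int.cast : ℤ → ZMod 2) * M2.map (Int.cast : ℤ → ZMod 2) := by
      intro M1 M2
      exact Matrix.map_mul (f := Int.castRingHom (ZMod 2))
    rw [key, hmap, hmap, hmap, hDgmap, one_mul]

/-- Let `M` be a positive-definite integer lattice of rank `2r` with Gram matrix `G`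
(symmetric, positive definite), and let `L ⊆ M` be the finite-index sublattice whose basis
is given by the columns of the integer matrix `P`, with odd index (equivalently `det P` odd).
If the Gram matrix `Pᵀ G P` of `L` satisfies `x_i·x_j = 2δ_{ij}` and `x_i·y_j = δ_{ij}`,
then the `x_i` (the first `r` columns of `P`) extend to a basis of `M` (a matrix
`T ∈ GL(2r, ℤ)` having the same first `r` columns as `P`) whose Gram matrix is
congruent mod 2 to the Gram matrix of `L`. -/
theorem extend_x_basis_mod_two (r : ℕ)
    (G : Matrix (Fin r ⊕ Fin r) (Fin r ⊕ Fin r) ℤ)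
    (hGsym : Gᵀ = G)
    (hGpos : ∀ v : Fin r ⊕ Fin r → ℤ, v ≠ 0 → 0 < v ⬝ᵥ G.mulVec v)
    (P : Matrix (Fin r ⊕ Fin r) (Fin r ⊕ Fin r) ℤ)
    (hPodd : Odd P.det)
    (hxx : ∀ i j, (Pᵀ * G * P) (Sum.inl i) (Sum.inl j) = if i = j then 2 else 0)
    (hxy : ∀ i j, (Pᵀ * G * P) (Sum.inl i) (Sum.inr j) = if i = j then 1 else 0) :
    ∃ T : Matrix (Fin r ⊕ Fin r) (Fin r ⊕ Fin r) ℤ,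
      IsUnit T.det ∧
      (∀ k i, T k (Sum.inl i) = P k (Sum.inl i)) ∧
      (Tᵀ * G * T).map (Int.cast : ℤ → ZMod 2) =
        (Pᵀ * G * P).map (Int.cast : ℤ → ZMod 2) := by
  classical
  set Xm : Matrix (Fin r ⊕ Fin r) (Fin r) ℤ := P.submatrix id Sum.inl with hXm
  set Y : Matrix (Fin r) (Fin r ⊕ Fin r) ℤ := (Pᵀ * G).submatrix Sum.inr id with hY
  have hAsymm : (Pᵀ * G * P)ᵀ = Pᵀ * G * P := by
    rw [Matrix.transpose_mul, Matrix.transpose_mul, Matrix.transpose_transpose, hGsym,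
      Matrix.mul_assoc]
  have hYX : Y * Xm = 1 := by
    ext k j
    rw [Matrix.mul_apply]
    have h1 : (Finset.univ.sum fun v => Y k v * Xm v j) = (Pᵀ * G * P) (Sum.inr k) (Sum.inl j) := by
      rw [Matrix.mul_apply]
      rfl
    rw [h1]
    have h2 : (Pᵀ * G * P) (Sum.inr k) (Sum.inl j) = (Pᵀ * G * P) (Sum.inl j) (Sum.inr k) := by
      conv_lhs => rw [← hAsymm]
      rfl
    rw [h2, hxy, Matrix.one_apply]
    by_cases h : j = k
    · simp [h]
    · simp [h, Ne.symm h]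
  -- linear maps
  set Λ : (Fin r ⊕ Fin r → ℤ) →ₗ[ℤ] (Fin r → ℤ) := Y.mulVecLin with hΛ
  set Xl : (Fin r → ℤ) →ₗ[ℤ] (Fin r ⊕ Fin r → ℤ) := Xm.mulVecLin with hXl
  have hcomp : Λ.comp Xl = LinearMap.id := by
    rw [hΛ, hXl, ← Matrix.mulVecLin_mul, hYX, Matrix.mulVecLin_one]
  have hcomp' : ∀ c, Λ (Xl c) = c := fun c => congrFun (congrArg (fun f => f.toFun) hcomp) c
  set K := LinearMap.ker Λ with hK
  have hker : ∀ v : Fin r ⊕ Fin r → ℤ, v - Xl (Λ v) ∈ K := by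
    intro v
    rw [hK, LinearMap.mem_ker, map_sub, hcomp', sub_self]
  set g1 : ((Fin r → ℤ) × K) →ₗ[ℤ] (Fin r ⊕ Fin r → ℤ) :=
    Xl.comp (LinearMap.fst ℤ (Fin r → ℤ) K) + K.subtype.comp (LinearMap.snd ℤ (Fin r → ℤ) K)
    with hg1
  set f1 : (Fin r ⊕ Fin r → ℤ) →ₗ[ℤ] ((Fin r → ℤ) × K) :=
    LinearMap.prod Λ ((LinearMap.id - Xl.comp Λ).codRestrict K (fun v => hker v)) with hf1
  have hgf : ∀ v, g1 (f1 v) = v := by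
    intro v
    simp [hg1, hf1]
  have hfg : ∀ cw : (Fin r → ℤ) × K, f1 (g1 cw) = cw := by
    rintro ⟨c, w, hw⟩
    have hΛw : Λ w = 0 := hw
    apply Prod.ext
    · simp [hg1, hf1, hcomp', hΛw]
    · apply Subtype.ext
      simp [hg1, hf1, hcomp', hΛw]
  set Φ : ((Fin r → ℤ) × K) ≃ₗ[ℤ] (Fin r ⊕ Fin r → ℤ) :=
    LinearEquiv.ofLinear g1 f1 (LinearMap.ext hgf) (LinearMap.ext hfg) with hΦ
  -- free module instances
  haveI : Module.Finite ℤ K := Module.Finite.iff_fg.mpr (IsNoetherian.noetherian K)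
  haveI : Module.Free ℤ K := Module.free_of_finite_type_torsion_free'
  set κ := Module.Free.ChooseBasisIndex ℤ K with hκ
  set bK : Module.Basis κ ℤ K := Module.Free.chooseBasis ℤ K with hbK
  set b0 : Module.Basis (Fin r ⊕ κ) ℤ (Fin r ⊕ Fin r → ℤ) := ((Pi.basisFun ℤ (Fin r)).prod bK).map Φ
    with hb0
  have hb0l : ∀ i v, b0 (Sum.inl i) v = P v (Sum.inl i) := by
    intro i v
    rw [hb0, Module.Basis.map_apply]
    have h1 : ((Pi.basisFun ℤ (Fin r)).prod bK) (Sum.inl i) = (Pi.single i 1, 0) := by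
      ext <;> simp [Module.Basis.prod_apply, Pi.basisFun_apply]
    rw [h1]
    show g1 (Pi.single i 1, 0) v = P v (Sum.inl i)
    simp [hg1, hXl, Matrix.mulVec_single_one, hXm]
  have hcard : Fintype.card κ = r := by
    have h1 := Module.finrank_eq_card_basis b0
    have h2 : Module.finrank ℤ (Fin r ⊕ Fin r → ℤ) = r + r := by
      simp [Module.finrank_pi]
    rw [h2, Fintype.card_sum, Fintype.card_fin] at h1
    omega
  set eκ : κ ≃ Fin r := Fintype.equivFinOfCardEq hcard with heκ
  set b : Module.Basis (Fin r ⊕ Fin r) ℤ (Fin r ⊕ Fin r → ℤ) :=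
    b0.reindex (Equiv.sumCongr (Equiv.refl (Fin r)) eκ) with hb
  have hbl : ∀ i v, b (Sum.inl i) v = P v (Sum.inl i) := by
    intro i v
    rw [hb, Module.Basis.reindex_apply]
    have : (Equiv.sumCongr (Equiv.refl (Fin r)) eκ).symm (Sum.inl i) = Sum.inl i := rfl
    rw [this, hb0l]
  set ebasis := Pi.basisFun ℤ (Fin r ⊕ Fin r) with hebasis
  set T0 : Matrix (Fin r ⊕ Fin r) (Fin r ⊕ Fin r) ℤ := ebasis.toMatrix b with hT0
  have hT0ap : ∀ w j, T0 w j = b j w := by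
    intro w j
    rw [hT0, Module.Basis.toMatrix_apply, hebasis, Pi.basisFun_repr]
  have hT0col : ∀ w i, T0 w (Sum.inl i) = P w (Sum.inl i) := by
    intro w i; rw [hT0ap, hbl]
  set T0' : Matrix (Fin r ⊕ Fin r) (Fin r ⊕ Fin r) ℤ := b.toMatrix ebasis with hT0'
  have hT0T0' : T0 * T0' = 1 := by
    rw [hT0, hT0']; exact Module.Basis.toMatrix_mul_toMatrix_flip _ _
  have hT0'T0 : T0' * T0 = 1 := by
    rw [hT0, hT0']; exact Module.Basis.toMatrix_mul_toMatrix_flip _ _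
  have hT0unit : IsUnit T0.det :=
    IsUnit.of_mul_eq_one _ (by rw [← Matrix.det_mul, hT0T0', Matrix.det_one])
  set U : Matrix (Fin r ⊕ Fin r) (Fin r ⊕ Fin r) ℤ := T0' * P with hU
  have hT0U : T0 * U = P := by
    rw [hU, ← Matrix.mul_assoc, hT0T0', Matrix.one_mul]
  have hUcol : ∀ v i, U v (Sum.inl i) = (1 : Matrix (Fin r ⊕ Fin r) (Fin r ⊕ Fin r) ℤ) v (Sum.inl i) := by
    intro v i
    rw [hU, Matrix.mul_apply]
    calc (Finset.univ.sum fun w => T0' v w * P w (Sum.inl i))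
        = Finset.univ.sum fun w => T0' v w * T0 w (Sum.inl i) := by
          apply Finset.sum_congr rfl
          intro w _
          rw [hT0col]
      _ = (T0' * T0) v (Sum.inl i) := by rw [Matrix.mul_apply]
      _ = _ := by rw [hT0'T0]
  -- blocks of U
  set Bm : Matrix (Fin r) (Fin r) ℤ := Matrix.of (fun i j => U (Sum.inl i) (Sum.inr j)) with hBm
  set D : Matrix (Fin r) (Fin r) ℤ := Matrix.of (fun i j => U (Sum.inr i) (Sum.inr j)) with hD
  have hUblocks : U = Matrix.fromBlocks 1 Bm 0 D := by
    ext v w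
    rcases v with v | v <;> rcases w with w | w
    · rw [Matrix.fromBlocks_apply₁₁, hUcol]
      simp [Matrix.one_apply]
    · rw [Matrix.fromBlocks_apply₁₂]; rfl
    · rw [Matrix.fromBlocks_apply₂₁, hUcol]
      simp [Matrix.one_apply]
    · rw [Matrix.fromBlocks_apply₂₂]; rfl
  have hUdet : U.det = D.det := by
    rw [hUblocks, Matrix.det_fromBlocks_zero₂₁, Matrix.det_one, one_mul]
  have hDodd : Odd D.det := by
    have hPdet : P.det = T0.det * U.det := by
      rw [← hT0U, Matrix.det_mul]
    rcases Int.isUnit_iff.mp hT0unit with h1 | h1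
    · rw [hPdet, h1, one_mul, hUdet] at hPodd; exact hPodd
    · rw [hPdet, h1, hUdet] at hPodd
      rcases hPodd with ⟨k, hk⟩
      exact ⟨-1 - k, by linarith⟩
  obtain ⟨S, hSunit, hSmap⟩ := lift_mod_two D hDodd
  set V : Matrix (Fin r ⊕ Fin r) (Fin r ⊕ Fin r) ℤ := Matrix.fromBlocks 1 Bm 0 S with hV
  refine ⟨T0 * V, ?_, ?_, ?_⟩
  · rw [Matrix.det_mul, hV, Matrix.det_fromBlocks_zero₂₁, Matrix.det_one, one_mul]
    exact hT0unit.mul hSunit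
  · intro w i
    rw [Matrix.mul_apply]
    have hVcol : ∀ v, V v (Sum.inl i) =
        (1 : Matrix (Fin r ⊕ Fin r) (Fin r ⊕ Fin r) ℤ) v (Sum.inl i) := by
      rintro (v | v)
      · rw [hV, Matrix.fromBlocks_apply₁₁]
        simp [Matrix.one_apply]
      · rw [hV, Matrix.fromBlocks_apply₂₁]
        simp [Matrix.one_apply]
    have h1 : (Finset.univ.sum fun v => T0 w v * V v (Sum.inl i)) =
        (T0 * (1 : Matrix (Fin r ⊕ Fin r) (Fin r ⊕ Fin r) ℤ)) w (Sum.inl i) := by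
      rw [Matrix.mul_apply]
      exact Finset.sum_congr rfl (fun v _ => by rw [hVcol])
    rw [h1, Matrix.mul_one, hT0col]
  · have hmap : ∀ {a b c : Type} [Fintype a] [Fintype b] [DecidableEq a] [DecidableEq b]
        (M1 : Matrix a b ℤ) (M2 : Matrix b c ℤ),
        (M1 * M2).map (Int.cast : ℤ → ZMod 2) =
          M1.map (Int.cast : ℤ → ZMod 2) * M2.map (Int.cast : ℤ → ZMod 2) := by
      intro a b c _ _ _ _ M1 M2
      exact Matrix.map_mul (f := Int.castRingHom (ZMod 2))
    have hVU : V.map (Int.cast : ℤ → ZMod 2) = U.map (Int.cast : ℤ → ZMod 2) := by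
      rw [hV, hUblocks, Matrix.fromBlocks_map, Matrix.fromBlocks_map, hSmap]
    have hTmap : (T0 * V).map (Int.cast : ℤ → ZMod 2) = P.map (Int.cast : ℤ → ZMod 2) := by
      rw [hmap, hVU, ← hmap, hT0U]
    have htr : ∀ (M : Matrix (Fin r ⊕ Fin r) (Fin r ⊕ Fin r) ℤ),
        Mᵀ.map (Int.cast : ℤ → ZMod 2) = (M.map (Int.cast : ℤ → ZMod 2))ᵀ := by
      intro M; exact Matrix.transpose_map
    rw [hmap, hmap, htr, hTmap, ← htr, ← hmap, ← hmap]
end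

section
/- Let M be a positive-definite integer lattice of rank 2r containing a sublattice L of odd finite index. If L is of half-integer surgery type, then M is of half-integer surgery type; moreover the number of basis elements y_i with odd square in the half-integer surgery basis can be taken the same for M as for L. -/
open Matrix

private lemma zmod2_cases (x : ZMod 2) : x = 0 ∨ x = 1 := by revert x; decide

lemma exists_lift_mod2 {n : Type*} [Fintype n] [DecidableEq n]
    (M : Matrix n n (ZMod 2)) (h : IsUnit M.det) :
    ∃ U : Matrix n n ℤ, IsUnit U.det ∧ U.map (Int.cast : ℤ → ZMod 2) = M := by
  haveI : Fact (Nat.Prime 2) := ⟨by norm_num⟩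
  refine Matrix.diagonal_transvection_induction
    (P := fun N => IsUnit N.det → ∃ U : Matrix n n ℤ, IsUnit U.det ∧ U.map (Int.cast : ℤ → ZMod 2) = N)
    M ?_ ?_ ?_ h
  · intro D hD hunit
    have hone : ∀ i, D i = 1 := by
      intro i
      rcases zmod2_cases (D i) with h0 | h1
      · exfalso
        rw [det_diagonal] at hunit
        have hz : (∏ j, D j) = 0 := Finset.prod_eq_zero (Finset.mem_univ i) h0
        rw [hz] at hunit
        exact hunit.ne_zero rfl
      · exact h1
    have : D = fun _ => 1 := funext hone
    subst this
    refine ⟨1, by simp, ?_⟩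
    rw [Matrix.diagonal_one]
    ext i j
    simp [Matrix.map_apply, Matrix.one_apply, apply_ite (Int.cast : ℤ → ZMod 2)]
  · intro t _
    refine ⟨Matrix.transvection t.i t.j ((t.c).val : ℤ), ?_, ?_⟩
    · rw [Matrix.det_transvection_of_ne _ _ t.hij]; exact isUnit_one
    · rw [Matrix.TransvectionStruct.toMatrix_mk]
      ext i j
      simp [Matrix.transvection, Matrix.map_apply, Matrix.one_apply,
        Matrix.single, ZMod.natCast_val, ZMod.cast_id]
  · intro A B hA hB hunit
    rw [Matrix.det_mul] at hunit
    obtain ⟨U, hU, hUm⟩ := hA (isUnit_of_mul_isUnit_left hunit)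
    obtain ⟨V, hV, hVm⟩ := hB (isUnit_of_mul_isUnit_right hunit)
    refine ⟨U * V, by rw [Matrix.det_mul]; exact hU.mul hV, ?_⟩
    rw [← hUm, ← hVm]
    exact Matrix.map_mul (f := Int.castRingHom (ZMod 2))

lemma even_norm_of_ker {r : ℕ}
    (G : Matrix (Fin r ⊕ Fin r) (Fin r ⊕ Fin r) ℤ)
    (P : Matrix (Fin r ⊕ Fin r) (Fin r ⊕ Fin r) ℤ)
    (hPodd : Odd P.det)
    (hxx : ∀ i j, (Pᵀ * G * P) (Sum.inl i) (Sum.inl j) = if i = j then 2 else 0)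
    (hxy : ∀ i j, (Pᵀ * G * P) (Sum.inl i) (Sum.inr j) = if i = j then 1 else 0)
    (v : Fin r ⊕ Fin r → ℤ)
    (hv : ∀ i, ((Pᵀ * G) *ᵥ v) (Sum.inl i) = 0) :
    Even (v ⬝ᵥ G *ᵥ v) := by
  set Q := Pᵀ * G * P with hQ
  set c := P.adjugate *ᵥ v with hc
  set d := P.det with hd
  have h1 : P *ᵥ c = d • v := by
    rw [hc, Matrix.mulVec_mulVec, Matrix.mul_adjugate, Matrix.smul_mulVec,
      Matrix.one_mulVec]
  have hQc : Q *ᵥ c = d • ((Pᵀ * G) *ᵥ v) := by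
    rw [hQ, ← Matrix.mulVec_mulVec, h1, Matrix.mulVec_smul]
  have h3 : ∀ i, (Q *ᵥ c) (Sum.inl i) = 0 := by
    intro i
    rw [hQc]
    simp [hv i]
  have h4 : ∀ i, c (Sum.inr i) = -2 * c (Sum.inl i) := by
    intro i
    have h0 := h3 i
    rw [Matrix.mulVec, dotProduct, Fintype.sum_sum_type] at h0
    simp only [hxx, hxy, ite_mul, one_mul, zero_mul, Finset.sum_ite_eq,
      Finset.mem_univ, if_true] at h0
    linarith
  have h2 : c ⬝ᵥ (Q *ᵥ c) = d * (d * (v ⬝ᵥ G *ᵥ v)) := by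
    rw [hQ, Matrix.mul_assoc, ← Matrix.mulVec_mulVec, Matrix.dotProduct_mulVec,
      Matrix.vecMul_transpose, h1, ← Matrix.mulVec_mulVec, h1, Matrix.mulVec_smul]
    simp only [smul_eq_mul, smul_dotProduct, dotProduct_smul,
      Pi.smul_apply, smul_eq_mul, Matrix.mulVec_smul]
  have h5 : Even (c ⬝ᵥ (Q *ᵥ c)) := by
    rw [even_iff_two_dvd, dotProduct]
    refine Finset.dvd_sum ?_
    rintro (i | i) _
    · rw [h3 i, mul_zero]
      exact dvd_zero 2
    · rw [h4 i]
      exact ⟨-(c (Sum.inl i)) * (Q *ᵥ c) (Sum.inr i), by ring⟩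
  rw [h2] at h5
  by_contra hodd
  rw [Int.not_even_iff_odd] at hodd
  have : Odd (d * (d * (v ⬝ᵥ G *ᵥ v))) := hPodd.mul (hPodd.mul hodd)
  exact (Int.not_odd_iff_even.mpr h5) this

/-- If a positive-definite integer lattice `M` of rank `2r` (with Gram matrix `G`)
contains a sublattice `L` (spanned by the columns of `P`) of odd finite index which is of
half-integer surgery type, then `M` is of half-integer surgery type; moreover the number of
basis vectors `y_i` of odd square can be taken to be the same for `M` as for `L`. -/
theorem halfIntSurgeryType_of_odd_index_sublattice (r : ℕ)
    (G : Matrix (Fin r ⊕ Fin r) (Fin r ⊕ Fin r) ℤ)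
    (hGsym : Gᵀ = G)
    (hGpos : ∀ v : Fin r ⊕ Fin r → ℤ, v ≠ 0 → 0 < v ⬝ᵥ G.mulVec v)
    (P : Matrix (Fin r ⊕ Fin r) (Fin r ⊕ Fin r) ℤ)
    (hPodd : Odd P.det)
    (hxx : ∀ i j, (Pᵀ * G * P) (Sum.inl i) (Sum.inl j) = if i = j then 2 else 0)
    (hxy : ∀ i j, (Pᵀ * G * P) (Sum.inl i) (Sum.inr j) = if i = j then 1 else 0) :
    ∃ T : Matrix (Fin r ⊕ Fin r) (Fin r ⊕ Fin r) ℤ,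
      IsUnit T.det ∧
      (∀ i j, (Tᵀ * G * T) (Sum.inl i) (Sum.inl j) = if i = j then 2 else 0) ∧
      (∀ i j, (Tᵀ * G * T) (Sum.inl i) (Sum.inr j) = if i = j then 1 else 0) ∧
      (Finset.univ.filter fun i : Fin r =>
          Odd ((Tᵀ * G * T) (Sum.inr i) (Sum.inr i))).card =
        (Finset.univ.filter fun i : Fin r =>
          Odd ((Pᵀ * G * P) (Sum.inr i) (Sum.inr i))).card := by
  classical
  set X : Matrix (Fin r ⊕ Fin r) (Fin r) ℤ := Matrix.of fun k i => P k (Sum.inl i) with hXdef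
  set Y : Matrix (Fin r ⊕ Fin r) (Fin r) ℤ := Matrix.of fun k i => P k (Sum.inr i) with hYdef
  -- matrix identities for the blocks of PᵀGP
  have hXGX : Xᵀ * G * X = (2:ℤ) • (1 : Matrix (Fin r) (Fin r) ℤ) := by
    ext i j
    have h := hxx i j
    simp only [Matrix.mul_apply, Matrix.transpose_apply] at h ⊢
    simp only [hXdef, Matrix.of_apply, Matrix.smul_apply, Matrix.one_apply, smul_eq_mul,
      mul_ite, mul_one, mul_zero]
    rw [h]
  have hXGY : Xᵀ * G * Y = (1 : Matrix (Fin r) (Fin r) ℤ) := by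
    ext i j
    have h := hxy i j
    simp only [Matrix.mul_apply, Matrix.transpose_apply] at h ⊢
    simp only [hXdef, hYdef, Matrix.of_apply, Matrix.one_apply]
    rw [h]
  set Phi : (Fin r ⊕ Fin r → ℤ) →ₗ[ℤ] (Fin r → ℤ) := Matrix.mulVecLin (Xᵀ * G) with hPhidef
  set K : Submodule ℤ (Fin r ⊕ Fin r → ℤ) := LinearMap.ker Phi with hKdef
  have hPhiY : ∀ a : Fin r → ℤ, Phi (Y *ᵥ a) = a := by
    intro a
    rw [hPhidef]
    simp only [Matrix.mulVecLin_apply, Matrix.mulVec_mulVec]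
    rw [hXGY, Matrix.one_mulVec]
  -- the linear equivalence (Fin r → ℤ) × K ≃ (Fin r ⊕ Fin r → ℤ)
  have hrank : Module.finrank ℤ K = r := by
    let f : ((Fin r → ℤ) × K) →ₗ[ℤ] (Fin r ⊕ Fin r → ℤ) :=
      (Matrix.mulVecLin Y).comp (LinearMap.fst ℤ _ _) + K.subtype.comp (LinearMap.snd ℤ _ _)
    have hf : ∀ p : (Fin r → ℤ) × K, f p = Y *ᵥ p.1 + (p.2 : Fin r ⊕ Fin r → ℤ) := by
      intro p; rfl
    have hinj : Function.Injective f := by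
      intro p q hpq
      rw [hf, hf] at hpq
      have h1 : Phi (Y *ᵥ p.1 + (p.2 : Fin r ⊕ Fin r → ℤ)) =
          Phi (Y *ᵥ q.1 + (q.2 : Fin r ⊕ Fin r → ℤ)) := by rw [hpq]
      rw [map_add, map_add, hPhiY, hPhiY, LinearMap.mem_ker.mp p.2.2,
        LinearMap.mem_ker.mp q.2.2, add_zero, add_zero] at h1
      have h2 : (p.2 : Fin r ⊕ Fin r → ℤ) = (q.2 : Fin r ⊕ Fin r → ℤ) := by
        have := hpq
        rw [h1] at this
        exact add_left_cancel this
      exact Prod.ext h1 (Subtype.ext h2)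
    have hsurj : Function.Surjective f := by
      intro v
      have hmem : v - Y *ᵥ (Phi v) ∈ K := by
        rw [hKdef, LinearMap.mem_ker, map_sub, hPhiY, sub_self]
      refine ⟨⟨Phi v, ⟨v - Y *ᵥ (Phi v), hmem⟩⟩, ?_⟩
      rw [hf]
      simp
    have e : ((Fin r → ℤ) × K) ≃ₗ[ℤ] (Fin r ⊕ Fin r → ℤ) :=
      LinearEquiv.ofBijective f ⟨hinj, hsurj⟩
    have h1 := e.finrank_eq
    rw [Module.finrank_prod, Module.finrank_pi, Module.finrank_pi] at h1
    simp only [Fintype.card_fin, Fintype.card_sum] at h1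
    omega
  let b : Module.Basis (Fin r) ℤ K := Module.finBasisOfFinrankEq ℤ K hrank
  set W : Matrix (Fin r ⊕ Fin r) (Fin r) ℤ :=
    Matrix.of fun k j => ((b j : K) : Fin r ⊕ Fin r → ℤ) k with hWdef
  have hWsum : ∀ cc : Fin r → ℤ,
      W *ᵥ cc = ((∑ j, cc j • b j : K) : Fin r ⊕ Fin r → ℤ) := by
    intro cc
    funext k
    rw [Matrix.mulVec, dotProduct]
    rw [show ((∑ j, cc j • b j : K) : Fin r ⊕ Fin r → ℤ) = ∑ j, cc j • ((b j : K) : Fin r ⊕ Fin r → ℤ) by push_cast; rfl]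
    rw [Finset.sum_apply]
    refine Finset.sum_congr rfl fun j _ => ?_
    simp [hWdef, mul_comm]
  have hWmem : ∀ cc : Fin r → ℤ, W *ᵥ cc ∈ K := by
    intro cc
    rw [hWsum]
    exact Submodule.coe_mem _
  have hWrep : ∀ (v : Fin r ⊕ Fin r → ℤ) (hv : v ∈ K),
      W *ᵥ (b.repr ⟨v, hv⟩) = v := by
    intro v hv
    rw [hWsum]
    have := b.sum_repr ⟨v, hv⟩
    rw [show (∑ j, (b.repr ⟨v, hv⟩) j • b j : K) = ⟨v, hv⟩ from this]
  have hXGW : (Xᵀ * G) * W = 0 := by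
    ext i j
    have hcol : (fun k => W k j) ∈ K := by
      have : (fun k => W k j) = ((b j : K) : Fin r ⊕ Fin r → ℤ) := by
        funext k; simp [hWdef]
      rw [this]
      exact Submodule.coe_mem _
    have h0 : Phi (fun k => W k j) = 0 := LinearMap.mem_ker.mp hcol
    have := congrFun h0 i
    simp only [hPhidef, Matrix.mulVecLin_apply, Matrix.mulVec, dotProduct] at this
    simp only [Matrix.mul_apply, Matrix.zero_apply]
    exact this
  set Z : Matrix (Fin r ⊕ Fin r) (Fin r) ℤ := X - (2:ℤ) • Y with hZdef
  have hXGZ : (Xᵀ * G) * Z = 0 := by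
    rw [hZdef, Matrix.mul_sub, Matrix.mul_smul]
    rw [hXGX, hXGY]
    ext i j
    simp [Matrix.smul_apply]
  have hZK : ∀ j, (fun k => Z k j) ∈ K := by
    intro j
    rw [hKdef, LinearMap.mem_ker]
    funext i
    have := congrFun (congrFun hXGZ i) j
    simp only [Matrix.mul_apply, Matrix.zero_apply] at this
    simp only [hPhidef, Matrix.mulVecLin_apply, Matrix.mulVec, dotProduct, Pi.zero_apply]
    exact this
  set A : Matrix (Fin r) (Fin r) ℤ :=
    Matrix.of fun i j => (b.repr ⟨fun k => Z k j, hZK j⟩) i with hAdef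
  have hZWA : Z = W * A := by
    ext k j
    have h := congrFun (hWrep _ (hZK j)) k
    rw [show (W *ᵥ (b.repr ⟨fun k => Z k j, hZK j⟩)) k = (W * A) k j by
      simp only [Matrix.mul_apply, Matrix.mulVec, dotProduct, hAdef, Matrix.of_apply]] at h
    exact h.symm
  haveI : Fact (Nat.Prime 2) := ⟨by norm_num⟩
  have hcastval : ∀ c : ZMod 2, (((c.val : ℤ) : ZMod 2)) = c := by
    intro c; push_cast; simp [ZMod.natCast_val, ZMod.cast_id]
  have hAbar : IsUnit (A.map (Int.cast : ℤ → ZMod 2)).det := by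
    by_contra hnu
    have hdet0 : (A.map (Int.cast : ℤ → ZMod 2)).det = 0 := by
      rcases zmod2_cases (A.map (Int.cast : ℤ → ZMod 2)).det with h0 | h1
      · exact h0
      · exact absurd (h1 ▸ isUnit_one) hnu
    obtain ⟨c, hc0, hcA⟩ := Matrix.exists_mulVec_eq_zero_iff.mpr hdet0
    set c' : Fin r → ℤ := fun i => ((c i).val : ℤ) with hc'def
    have hAc' : ∀ i, (2:ℤ) ∣ (A *ᵥ c') i := by
      intro i
      have hmv : ((A *ᵥ c') i : ZMod 2) = (A.map (Int.cast : ℤ → ZMod 2) *ᵥ c) i := by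
        simp only [Matrix.mulVec, dotProduct, Matrix.map_apply]
        push_cast
        refine Finset.sum_congr rfl fun j _ => ?_
        rw [hc'def]
        simp [hcastval]
      rw [hcA] at hmv
      have hdvd := (ZMod.intCast_zmod_eq_zero_iff_dvd ((A *ᵥ c') i) 2).mp (by simpa using hmv)
      exact_mod_cast hdvd
    have hXc' : ∀ k, (2:ℤ) ∣ (X *ᵥ c') k := by
      intro k
      have hsplit : (X *ᵥ c') k = (W *ᵥ (A *ᵥ c')) k + 2 * (Y *ᵥ c') k := by
        have : X = Z + (2:ℤ) • Y := by rw [hZdef, sub_add_cancel]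
        rw [this, Matrix.add_mulVec, Matrix.smul_mulVec, hZWA, Matrix.mulVec_mulVec]
        simp [Matrix.mul_apply, Matrix.mulVec, dotProduct]
      rw [hsplit]
      refine dvd_add ?_ ⟨(Y *ᵥ c') k, rfl⟩
      rw [Matrix.mulVec, dotProduct]
      refine Finset.dvd_sum fun j _ => Dvd.dvd.mul_left (hAc' j) _
    set u : Fin r ⊕ Fin r → ℤ := Sum.elim c' 0 with hudef
    have hPu : P *ᵥ u = X *ᵥ c' := by
      funext k
      rw [Matrix.mulVec, dotProduct, Fintype.sum_sum_type]
      simp [hudef, hXdef, Matrix.mulVec, dotProduct]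
    have hPdet : (P.map (Int.cast : ℤ → ZMod 2)).det ≠ 0 := by
      have h1 : (P.map (Int.cast : ℤ → ZMod 2)).det = ((P.det : ℤ) : ZMod 2) := by
        have h2 := (RingHom.map_det (Int.castRingHom (ZMod 2)) P).symm
        simp only [RingHom.mapMatrix_apply, Int.coe_castRingHom] at h2
        exact h2
      obtain ⟨m, hm⟩ := hPodd
      rw [h1, hm]
      push_cast
      have htwo : (2 : ZMod 2) = 0 := rfl
      rw [htwo]
      simp
    have hubar : (fun a => ((u a : ℤ) : ZMod 2)) = 0 := by
      by_contra hne
      refine hPdet (Matrix.exists_mulVec_eq_zero_iff.mp ⟨fun a => ((u a : ℤ) : ZMod 2), hne, ?_⟩)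
      funext k
      have hmv : (((P *ᵥ u) k : ℤ) : ZMod 2) = (P.map (Int.cast : ℤ → ZMod 2) *ᵥ fun a => ((u a : ℤ) : ZMod 2)) k := by
        simp only [Matrix.mulVec, dotProduct, Matrix.map_apply]
        push_cast
        rfl
      rw [Pi.zero_apply, ← hmv, hPu]
      obtain ⟨w, hw⟩ := hXc' k
      rw [hw]
      push_cast
      have htwo : (2 : ZMod 2) = 0 := rfl
      rw [htwo]
      simp
    apply hc0
    funext i
    have := congrFun hubar (Sum.inl i)
    simp only [hudef, Sum.elim_inl, hc'def, hcastval, Pi.zero_apply] at this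
    exact this
  obtain ⟨U, hUdet, hUmap⟩ := exists_lift_mod2 (A.map (Int.cast : ℤ → ZMod 2)) hAbar
  have hAU2 : ∀ i j, (2:ℤ) ∣ (A i j - U i j) := by
    intro i j
    have hz : ((A i j - U i j : ℤ) : ZMod 2) = 0 := by
      push_cast
      rw [sub_eq_zero]
      have h1 : ((U i j : ℤ) : ZMod 2) = (A.map (Int.cast : ℤ → ZMod 2)) i j := by
        rw [← hUmap]; rfl
      exact h1.symm
    exact_mod_cast (ZMod.intCast_zmod_eq_zero_iff_dvd _ 2).mp hz
  set C : Matrix (Fin r) (Fin r) ℤ := Matrix.of fun i j => (A i j - U i j) / 2 with hCdef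
  have hA2C : A = U + (2:ℤ) • C := by
    ext i j
    have h2 := Int.mul_ediv_cancel' (hAU2 i j)
    simp only [Matrix.add_apply, Matrix.smul_apply, hCdef, Matrix.of_apply, smul_eq_mul]
    omega
  set D : Matrix (Fin r ⊕ Fin r) (Fin r) ℤ := W * C with hDdef
  set Y' : Matrix (Fin r ⊕ Fin r) (Fin r) ℤ := Y + D with hY'def
  set Z' : Matrix (Fin r ⊕ Fin r) (Fin r) ℤ := W * U with hZ'def
  have hWA : W * A = W * U + (2:ℤ) • (W * C) := by
    rw [hA2C, Matrix.mul_add, Matrix.mul_smul]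
  have hZ'XY' : Z' = X - (2:ℤ) • Y' := by
    rw [hZ'def, hY'def]
    calc W * U = W * A - (2:ℤ) • (W * C) := (eq_sub_of_add_eq hWA.symm)
    _ = Z - (2:ℤ) • (W * C) := by rw [← hZWA]
    _ = X - (2:ℤ) • Y - (2:ℤ) • (W * C) := by rw [hZdef]
    _ = X - (2:ℤ) • (Y + W * C) := by rw [smul_add]; abel
  have hXGD : (Xᵀ * G) * D = 0 := by
    rw [hDdef, ← Matrix.mul_assoc, hXGW, Matrix.zero_mul]
  have hXGY' : Xᵀ * G * Y' = 1 := by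
    rw [hY'def, Matrix.mul_add, hXGY, hXGD, add_zero]
  set T : Matrix (Fin r ⊕ Fin r) (Fin r ⊕ Fin r) ℤ :=
    Matrix.of fun k a => Sum.elim (fun i => X k i) (fun i => Y' k i) a with hTdef
  have hTll : ∀ i j, (Tᵀ * G * T) (Sum.inl i) (Sum.inl j) = (Xᵀ * G * X) i j := by
    intro i j
    simp [hTdef, Matrix.mul_apply]
  have hTlr : ∀ i j, (Tᵀ * G * T) (Sum.inl i) (Sum.inr j) = (Xᵀ * G * Y') i j := by
    intro i j
    simp [hTdef, Matrix.mul_apply]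
  have hTrr : ∀ i j, (Tᵀ * G * T) (Sum.inr i) (Sum.inr j) = (Y'ᵀ * G * Y') i j := by
    intro i j
    simp [hTdef, Matrix.mul_apply]
  have hPrr : ∀ i j, (Pᵀ * G * P) (Sum.inr i) (Sum.inr j) = (Yᵀ * G * Y) i j := by
    intro i j
    simp [hYdef, Matrix.mul_apply]
  -- the diagonal parity computation
  have hY'GY' : Y'ᵀ * G * Y' = Yᵀ*G*Y + Yᵀ*G*D + (Dᵀ*G*Y + Dᵀ*G*D) := by
    rw [hY'def, Matrix.transpose_add, Matrix.add_mul, Matrix.add_mul, Matrix.mul_add,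
      Matrix.mul_add]
  have hDGYsym : ∀ i, (Dᵀ*G*Y) i i = (Yᵀ*G*D) i i := by
    intro i
    have ht : (Dᵀ*G*Y)ᵀ = Yᵀ*G*D := by
      rw [Matrix.transpose_mul, Matrix.transpose_mul, Matrix.transpose_transpose, hGsym,
        Matrix.mul_assoc]
    calc (Dᵀ*G*Y) i i = (Dᵀ*G*Y)ᵀ i i := rfl
    _ = (Yᵀ*G*D) i i := by rw [ht]
  have hDcolK : ∀ j, (fun k => D k j) ∈ K := by
    intro j
    have : (fun k => D k j) = W *ᵥ (fun i => C i j) := by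
      funext k
      simp [hDdef, Matrix.mul_apply, Matrix.mulVec, dotProduct]
    rw [this]
    exact hWmem _
  have hKPG : ∀ (v : Fin r ⊕ Fin r → ℤ), v ∈ K → ∀ i, ((Pᵀ * G) *ᵥ v) (Sum.inl i) = 0 := by
    intro v hv i
    have h0 : Phi v = 0 := LinearMap.mem_ker.mp hv
    have h1 := congrFun h0 i
    simp only [hPhidef, Matrix.mulVecLin_apply, Pi.zero_apply] at h1
    rw [← h1]
    simp [Matrix.mulVec, dotProduct, Matrix.mul_apply, hXdef]
  have hDGDeven : ∀ i, Even ((Dᵀ*G*D) i i) := by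
    intro i
    have hentry : (Dᵀ*G*D) i i = (fun k => D k i) ⬝ᵥ G *ᵥ (fun k => D k i) := by
      rw [Matrix.mul_assoc]
      simp [Matrix.mul_apply, Matrix.mulVec, dotProduct, Finset.mul_sum]
    rw [hentry]
    exact even_norm_of_ker G P hPodd hxx hxy _ (hKPG _ (hDcolK i))
  have hparity : ∀ i, (Odd ((Tᵀ*G*T) (Sum.inr i) (Sum.inr i)) ↔
      Odd ((Pᵀ*G*P) (Sum.inr i) (Sum.inr i))) := by
    intro i
    obtain ⟨e, he⟩ := hDGDeven i
    have h1 : (Tᵀ*G*T) (Sum.inr i) (Sum.inr i) =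
        (Yᵀ*G*Y) i i + (Yᵀ*G*D) i i + ((Yᵀ*G*D) i i + (e + e)) := by
      rw [hTrr, hY'GY']
      simp only [Matrix.add_apply]
      rw [hDGYsym, he]
    rw [h1, hPrr, Int.odd_iff, Int.odd_iff]
    omega
  -- surjectivity, hence unimodularity
  have hsurj : Function.Surjective (T.mulVec) := by
    intro e
    set aa : Fin r → ℤ := (Xᵀ * G) *ᵥ e with haadef
    have hkmem : e - Y' *ᵥ aa ∈ K := by
      rw [hKdef, LinearMap.mem_ker, map_sub]
      have : Phi (Y' *ᵥ aa) = aa := by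
        rw [hPhidef]
        simp only [Matrix.mulVecLin_apply, Matrix.mulVec_mulVec]
        rw [hXGY', Matrix.one_mulVec]
      rw [this, hPhidef]
      simp only [Matrix.mulVecLin_apply, haadef, sub_self]
    set cc : Fin r → ℤ := ⇑(b.repr ⟨e - Y' *ᵥ aa, hkmem⟩) with hccdef
    have hk : W *ᵥ cc = e - Y' *ᵥ aa := hWrep _ hkmem
    have hUV : U * U⁻¹ = 1 := Matrix.mul_nonsing_inv U hUdet
    set c2 : Fin r → ℤ := U⁻¹ *ᵥ cc with hc2def
    have hZ'c2 : Z' *ᵥ c2 = e - Y' *ᵥ aa := by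
      rw [hc2def, Matrix.mulVec_mulVec, hZ'def, Matrix.mul_assoc, hUV, Matrix.mul_one, hk]
    refine ⟨Sum.elim c2 (aa - (2:ℤ) • c2), ?_⟩
    have hTv : T *ᵥ (Sum.elim c2 (aa - (2:ℤ) • c2)) =
        X *ᵥ c2 + Y' *ᵥ (aa - (2:ℤ) • c2) := by
      funext k
      rw [Matrix.mulVec, dotProduct, Fintype.sum_sum_type]
      simp [hTdef, Matrix.mulVec, dotProduct]
    rw [hTv]
    have hX : X = Z' + (2:ℤ) • Y' := by rw [hZ'XY']; abel
    rw [hX, Matrix.add_mulVec, Matrix.smul_mulVec, hZ'c2, Matrix.mulVec_sub]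
    rw [Matrix.mulVec_smul]
    abel
  have hTdet : IsUnit T.det := by
    have hU := Matrix.mulVec_surjective_iff_isUnit.mp hsurj
    exact (Matrix.isUnit_iff_isUnit_det T).mp hU
  refine ⟨T, hTdet, ?_, ?_, ?_⟩
  · intro i j
    rw [hTll, hXGX]
    simp [Matrix.one_apply]
  · intro i j
    rw [hTlr, hXGY']
    simp [Matrix.one_apply]
  · congr 1
    exact Finset.filter_congr fun i _ => by rw [hparity i]
end

section
/- Let L be a positive-definite lattice with no nonzero vectors of square ≤ 2, and consider M = L ⊕ ℤ^k (orthogonal direct sum). Suppose x_1, x_2 ∈ M are vectors with x_1·x_1 = x_2·x_2 = 2, x_1·x_2 = 0, and suppose there exist y_1, y_2 ∈ M with x_i·y_j = δ_{ij}. Then the projections of x_1 and x_2 to ℤ^k have disjoint supports. -/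
open Matrix

private lemma sq_le_two_cases (z : ℤ) (h : z * z ≤ 2) : z = -1 ∨ z = 0 ∨ z = 1 := by
  have h1 : -1 ≤ z := by nlinarith
  have h2 : z ≤ 1 := by nlinarith
  omega

/-- Let `L` be a positive-definite lattice (Gram matrix `G`) with no nonzero vectors of
square `≤ 2`, and let `M = L ⊕ ℤ^k` with the orthogonal direct sum form.  If `x_1, x_2 ∈ M`
satisfy `x_1·x_1 = x_2·x_2 = 2`, `x_1·x_2 = 0`, and there exist `y_1, y_2 ∈ M` with
`x_i·y_j = δ_{ij}`, then the projections of `x_1` and `x_2` to `ℤ^k` have disjoint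
supports. -/
theorem disjoint_supports_of_dual_pairs (m k : ℕ)
    (G : Matrix (Fin m) (Fin m) ℤ)
    (hGsym : Gᵀ = G)
    (hGpos : ∀ v : Fin m → ℤ, v ≠ 0 → 0 < v ⬝ᵥ G.mulVec v)
    (hmin : ∀ v : Fin m → ℤ, v ≠ 0 → 2 < v ⬝ᵥ G.mulVec v)
    (B : ((Fin m → ℤ) × (Fin k → ℤ)) → ((Fin m → ℤ) × (Fin k → ℤ)) → ℤ)
    (hB : ∀ u v, B u v = u.1 ⬝ᵥ G.mulVec v.1 + u.2 ⬝ᵥ v.2)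
    (x₁ x₂ y₁ y₂ : (Fin m → ℤ) × (Fin k → ℤ))
    (hx₁ : B x₁ x₁ = 2) (hx₂ : B x₂ x₂ = 2) (hx₁₂ : B x₁ x₂ = 0)
    (hxy₁₁ : B x₁ y₁ = 1) (hxy₁₂ : B x₁ y₂ = 0)
    (hxy₂₁ : B x₂ y₁ = 0) (hxy₂₂ : B x₂ y₂ = 1) :
    ∀ i : Fin k, x₁.2 i = 0 ∨ x₂.2 i = 0 := by
  by_contra h
  push_neg at h
  obtain ⟨i, hai, hbi⟩ := h
  rw [hB] at hx₁ hx₂ hx₁₂ hxy₁₁ hxy₂₁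
  have hnn : ∀ (v : Fin k → ℤ), 0 ≤ v ⬝ᵥ v := fun v =>
    Finset.sum_nonneg fun j _ => mul_self_nonneg _
  have h1 : x₁.1 = 0 := by
    by_contra hne
    have := hmin x₁.1 hne
    have := hnn x₁.2
    omega
  have h2 : x₂.1 = 0 := by
    by_contra hne
    have := hmin x₂.1 hne
    have := hnn x₂.2
    omega
  rw [h1] at hx₁ hx₁₂ hxy₁₁
  rw [h2] at hx₂ hxy₂₁
  simp only [zero_dotProduct, zero_add] at hx₁ hx₂ hx₁₂ hxy₁₁ hxy₂₁
  set a := x₁.2 with ha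
  set b := x₂.2 with hbdef
  have hsum : ∀ (v : Fin k → ℤ), v ⬝ᵥ v = ∑ t, v t * v t := fun v => rfl
  have hentry : ∀ (v : Fin k → ℤ), v ⬝ᵥ v = 2 → ∀ t, v t = -1 ∨ v t = 0 ∨ v t = 1 := by
    intro v hv t
    apply sq_le_two_cases
    rw [← hv, hsum]
    exact Finset.single_le_sum (fun j _ => mul_self_nonneg (v j)) (Finset.mem_univ t)
  have hAe := hentry a hx₁
  have hBe := hentry b hx₂
  have hai1 : a i = -1 ∨ a i = 1 := by rcases hAe i with h|h|h <;> tauto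
  have hbi1 : b i = -1 ∨ b i = 1 := by rcases hBe i with h|h|h <;> tauto
  have hortho : ∑ t, a t * b t = 0 := hx₁₂
  have hexj : ∃ j, j ≠ i ∧ a j ≠ 0 ∧ b j ≠ 0 := by
    by_contra hc
    push_neg at hc
    have hzsum : ∑ t, a t * b t = a i * b i := by
      apply Finset.sum_eq_single i
      · intro t _ ht
        rcases Classical.em (a t = 0) with hz|hz
        · rw [hz, zero_mul]
        · have hbz : b t = 0 := hc t ht hz
          rw [hbz, mul_zero]
      · intro hcon; exact absurd (Finset.mem_univ i) hcon
    rw [hzsum] at hortho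
    rcases hai1 with h|h <;> rcases hbi1 with h'|h' <;> rw [h, h'] at hortho <;> omega
  obtain ⟨j, hji, haj, hbj⟩ := hexj
  have hsupport : ∀ (v : Fin k → ℤ), v ⬝ᵥ v = 2 → v i ≠ 0 → v j ≠ 0 →
      ∀ t, t ≠ i → t ≠ j → v t = 0 := by
    intro v hv hvi hvj t hti htj
    have hvi2 : 1 ≤ v i * v i := by
      rcases hentry v hv i with h|h|h <;> first | (rw [h]; omega) | exact absurd h hvi
    have hvj2 : 1 ≤ v j * v j := by
      rcases hentry v hv j with h|h|h <;> first | (rw [h]; omega) | exact absurd h hvj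
    have hle : ∑ s ∈ ({i, j, t} : Finset (Fin k)), v s * v s ≤ ∑ s, v s * v s :=
      Finset.sum_le_sum_of_subset_of_nonneg (Finset.subset_univ _)
        (fun s _ _ => mul_self_nonneg _)
    have heq : ∑ s ∈ ({i, j, t} : Finset (Fin k)), v s * v s
        = v i * v i + v j * v j + v t * v t := by
      rw [show ({i, j, t} : Finset (Fin k)) = insert i (insert j {t}) from rfl]
      rw [Finset.sum_insert (by simp [Ne.symm hji, Ne.symm hti]),
        Finset.sum_insert (by simp [Ne.symm htj]), Finset.sum_singleton]
      ring
    rw [heq] at hle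
    rw [hsum] at hv
    have hz : v t * v t ≤ 0 := by omega
    exact mul_self_eq_zero.mp (le_antisymm hz (mul_self_nonneg _))
  have hAsupp := hsupport a hx₁ hai haj
  have hBsupp := hsupport b hx₂ hbi hbj
  have hpar : ∀ t, (a t + b t) % 2 = 0 := by
    intro t
    by_cases hti : t = i
    · subst hti
      rcases hai1 with h|h <;> rcases hbi1 with h'|h' <;> rw [h, h'] <;> decide
    · by_cases htj : t = j
      · subst htj
        have h1 : a t = -1 ∨ a t = 1 := by
          rcases hAe t with h|h|h <;> first | tauto | exact absurd h haj
        have h2 : b t = -1 ∨ b t = 1 := by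
          rcases hBe t with h|h|h <;> first | tauto | exact absurd h hbj
        rcases h1 with h|h <;> rcases h2 with h'|h' <;> rw [h, h'] <;> decide
      · rw [hAsupp t hti htj, hBsupp t hti htj]
        decide
  have hkey : a ⬝ᵥ y₁.2 + b ⬝ᵥ y₁.2 = ∑ t, (a t + b t) * y₁.2 t := by
    simp only [dotProduct, add_mul, Finset.sum_add_distrib]
  have hone : (1 : ℤ) = ∑ t, (a t + b t) * y₁.2 t := by
    rw [← hkey, hxy₁₁, hxy₂₁]; ring
  have hmod : (∑ t, (a t + b t) * y₁.2 t) % 2 = 0 := by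
    rw [Finset.sum_int_mod]
    have : ∀ t ∈ Finset.univ, ((a t + b t) * y₁.2 t) % 2 = 0 := by
      intro t _
      rw [Int.mul_emod, hpar t, zero_mul, Int.zero_emod]
    rw [Finset.sum_congr rfl this, Finset.sum_const, smul_zero, Int.zero_emod]
  omega
end

section
/- For any n ≥ 1 and k ≥ 0, the lattice L_n ⊕ ℤ^k, where L_n is a positive-definite lattice of rank 2n with minimum ≥ 4, admits no finite-index (full-rank) sublattice of half-integer surgery type. -/
open Matrix Finset

private lemma key_comb {k r : ℕ} (u z : Fin r → (Fin k → ℤ))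
    (huu : ∀ i j, u i ⬝ᵥ u j = if i = j then 2 else 0)
    (huz : ∀ i j, u i ⬝ᵥ z j = if i = j then 1 else 0) : r + r ≤ k := by
  classical
  set supp : Fin r → Finset (Fin k) := fun i => Finset.univ.filter (fun a => u i a ≠ 0) with hsupp
  have h2 : ∀ i, ∑ a, u i a * u i a = 2 := by
    intro i; have := huu i i; simpa [dotProduct] using this
  have hle : ∀ i a, u i a * u i a ≤ 2 := by
    intro i a
    calc u i a * u i a ≤ ∑ b, u i b * u i b :=
          Finset.single_le_sum (f := fun b => u i b * u i b)
            (fun b _ => mul_self_nonneg _) (Finset.mem_univ a)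
      _ = 2 := h2 i
  have hbd : ∀ i a, -1 ≤ u i a ∧ u i a ≤ 1 := by
    intro i a
    constructor <;> nlinarith [hle i a]
  have hsq : ∀ i a, u i a ≠ 0 → u i a * u i a = 1 := by
    intro i a ha
    have h1 := (hbd i a).1; have h2 := (hbd i a).2
    have : u i a = -1 ∨ u i a = 1 := by omega
    rcases this with h | h <;> rw [h] <;> ring
  have hcard : ∀ i, (supp i).card = 2 := by
    intro i
    have hsum : ∑ a ∈ supp i, u i a * u i a = 2 := by
      rw [← h2 i]
      refine Finset.sum_subset (Finset.subset_univ _) ?_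
      intro a _ ha
      have : u i a = 0 := by
        by_contra h
        exact ha (Finset.mem_filter.mpr ⟨Finset.mem_univ a, h⟩)
      simp [this]
    have : ∑ a ∈ supp i, u i a * u i a = (supp i).card := by
      rw [Finset.card_eq_sum_ones]
      push_cast
      refine Finset.sum_congr rfl ?_
      intro a ha
      exact hsq i a (Finset.mem_filter.mp ha).2
    omega
  have hdisj : ∀ i j, i ≠ j → Disjoint (supp i) (supp j) := by
    intro i j hij
    rw [Finset.disjoint_left]
    intro a hai haj
    have hia : u i a ≠ 0 := (Finset.mem_filter.mp hai).2
    have hja : u j a ≠ 0 := (Finset.mem_filter.mp haj).2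
    -- orthogonality
    have horth : ∑ c, u i c * u j c = 0 := by
      have := huu i j; simp [dotProduct, hij] at this; exact this
    -- supp i = {a, b}
    obtain ⟨p, q, hpq, hiset⟩ := Finset.card_eq_two.mp (hcard i)
    have hamem : a = p ∨ a = q := by
      have := hiset ▸ hai; simpa using this
    obtain ⟨b, hab, hib⟩ : ∃ b, b ≠ a ∧ supp i = {a, b} := by
      rcases hamem with rfl | rfl
      · exact ⟨q, fun h => hpq h.symm, hiset⟩
      · exact ⟨p, fun h => hpq h, by rw [hiset, Finset.pair_comm]⟩
    have hiz : ∀ c, c ∉ ({a, b} : Finset (Fin k)) → u i c = 0 := by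
      intro c hc
      by_contra h
      exact hc (hib ▸ Finset.mem_filter.mpr ⟨Finset.mem_univ c, h⟩)
    have hibne : u i b ≠ 0 := by
      have : b ∈ supp i := by rw [hib]; simp
      exact (Finset.mem_filter.mp this).2
    -- reduce orthogonality to two terms
    have h0 : u i a * u j a + u i b * u j b = 0 := by
      have hsub : ∑ c ∈ ({a, b} : Finset (Fin k)), u i c * u j c = 0 := by
        rw [← horth]
        refine Finset.sum_subset (Finset.subset_univ _) ?_
        intro c _ hc
        rw [hiz c hc]; ring
      rwa [Finset.sum_pair (fun h => hab h.symm)] at hsub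
    have hjbne : u j b ≠ 0 := by
      intro h
      rw [h] at h0
      have : u i a * u j a = 0 := by linarith
      rcases mul_eq_zero.mp this with h' | h' <;> [exact hia h'; exact hja h']
    -- supp j = {a, b} too
    have hjb : supp j = {a, b} := by
      refine (Finset.eq_of_subset_of_card_le ?_ ?_).symm
      · intro c hc
        simp only [Finset.mem_insert, Finset.mem_singleton] at hc
        rcases hc with rfl | rfl
        · exact haj
        · exact Finset.mem_filter.mpr ⟨Finset.mem_univ _, hjbne⟩
      · rw [hcard j, Finset.card_pair (fun h => hab h.symm)]
    have hjz : ∀ c, c ∉ ({a, b} : Finset (Fin k)) → u j c = 0 := by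
      intro c hc
      by_contra h
      exact hc (hjb ▸ Finset.mem_filter.mpr ⟨Finset.mem_univ c, h⟩)
    -- squares are one
    have hia2 := hsq i a hia
    have hib2 := hsq i b hibne
    -- key identity: u i b * u j a + u i a * u j b = 0
    have hkey : u i b * u j a + u i a * u j b = 0 := by
      linear_combination (u i a * u i b) * h0 - (u i b * u j a) * hia2 - (u i a * u j b) * hib2
    -- parity argument
    have hzi : ∑ c, u i c * z i c = 1 := by
      have := huz i i; simpa [dotProduct] using this
    have hzj : ∑ c, u j c * z i c = 0 := by
      have := huz j i; simp [dotProduct, Ne.symm hij] at this; exact this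
    have hval : ∑ c, (u j a * u i c - u i a * u j c) * z i c = u j a := by
      have : ∑ c, (u j a * u i c - u i a * u j c) * z i c
          = u j a * ∑ c, u i c * z i c - u i a * ∑ c, u j c * z i c := by
        rw [Finset.mul_sum, Finset.mul_sum, ← Finset.sum_sub_distrib]
        refine Finset.sum_congr rfl (fun c _ => by ring)
      rw [this, hzi, hzj]; ring
    have hdvd : (2 : ℤ) ∣ u j a := by
      rw [← hval]
      refine Finset.dvd_sum ?_
      intro c _
      refine Dvd.dvd.mul_right ?_ _
      by_cases hca : c = a
      · subst hca; exact ⟨0, by ring⟩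
      · by_cases hcb : c = b
        · rw [hcb]
          exact ⟨-(u i a * u j b), by linear_combination hkey⟩
        · have h1 : u i c = 0 := hiz c (by simp [hca, hcb])
          have h2 : u j c = 0 := hjz c (by simp [hca, hcb])
          rw [h1, h2]; exact ⟨0, by ring⟩
    have := (hbd j a).1; have := (hbd j a).2
    omega
  -- count
  have hb : (Finset.univ.biUnion supp).card = ∑ i, (supp i).card :=
    Finset.card_biUnion (fun i _ j _ hij => hdisj i j hij)
  have hsum : ∑ i : Fin r, (supp i).card = 2 * r := by
    simp [hcard, Finset.sum_const, mul_comm]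
  have hle' : (Finset.univ.biUnion supp).card ≤ k := by
    simpa using Finset.card_le_card (Finset.subset_univ (Finset.univ.biUnion supp))
  omega


private def castMapAux (m k : ℕ) :
    ((Fin m → ℤ) × (Fin k → ℤ)) →ₗ[ℤ] ((Fin m → ℚ) × (Fin k → ℚ)) where
  toFun p := (fun i => (p.1 i : ℚ), fun i => (p.2 i : ℚ))
  map_add' p q := by
    refine Prod.ext ?_ ?_ <;> funext i <;> push_cast <;> simp
  map_smul' c p := by
    refine Prod.ext ?_ ?_ <;> funext i <;> push_cast <;> simp

private lemma castMapAux_fst (m k : ℕ) (p : (Fin m → ℤ) × (Fin k → ℤ)) (j : Fin m) :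
    (castMapAux m k p).1 j = ((p.1 j : ℚ)) := rfl

private lemma castMapAux_snd (m k : ℕ) (p : (Fin m → ℤ) × (Fin k → ℤ)) (j : Fin k) :
    (castMapAux m k p).2 j = ((p.2 j : ℚ)) := rfl

private lemma castMapAux_inl (m k : ℕ) (i : Fin m) :
    ((Pi.basisFun ℚ (Fin m)).prod (Pi.basisFun ℚ (Fin k))) (Sum.inl i)
      = castMapAux m k (Pi.single i 1, 0) := by
  refine Prod.ext ?_ ?_
  · rw [Module.Basis.prod_apply_inl_fst]
    funext j
    rw [castMapAux_fst]
    by_cases h : j = i <;>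
      simp [Pi.basisFun_apply, Pi.single_apply, h]
  · rw [Module.Basis.prod_apply_inl_snd]
    funext j
    rw [castMapAux_snd]
    simp

private lemma castMapAux_inr (m k : ℕ) (i : Fin k) :
    ((Pi.basisFun ℚ (Fin m)).prod (Pi.basisFun ℚ (Fin k))) (Sum.inr i)
      = castMapAux m k (0, Pi.single i 1) := by
  refine Prod.ext ?_ ?_
  · rw [Module.Basis.prod_apply_inr_fst]
    funext j
    rw [castMapAux_fst]
    simp
  · rw [Module.Basis.prod_apply_inr_snd]
    funext j
    rw [castMapAux_snd]
    by_cases h : j = i <;>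
      simp [Pi.basisFun_apply, Pi.single_apply, h]

/-- For `n ≥ 1` and `k ≥ 0`, if `L_n` is a positive-definite lattice of rank `2n`
(Gram matrix `G`) with minimum `≥ 4`, then the orthogonal direct sum `L_n ⊕ ℤ^k` admits
no finite-index sublattice of half-integer surgery type: there are no vectors
`x_1, …, x_r, y_1, …, y_r` with `x_i·x_j = 2δ_{ij}`, `x_i·y_j = δ_{ij}` spanning a
finite-index subgroup. -/
theorem no_halfIntSurgery_sublattice_Ln_plus_Zk (n k : ℕ) (hn : 1 ≤ n)
    (G : Matrix (Fin (2 * n)) (Fin (2 * n)) ℤ)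
    (hGsym : Gᵀ = G)
    (hGpos : ∀ v : Fin (2 * n) → ℤ, v ≠ 0 → 0 < v ⬝ᵥ G.mulVec v)
    (hmin : ∀ v : Fin (2 * n) → ℤ, v ≠ 0 → 4 ≤ v ⬝ᵥ G.mulVec v)
    (B : ((Fin (2 * n) → ℤ) × (Fin k → ℤ)) → ((Fin (2 * n) → ℤ) × (Fin k → ℤ)) → ℤ)
    (hB : ∀ u v, B u v = u.1 ⬝ᵥ G.mulVec v.1 + u.2 ⬝ᵥ v.2) :
    ¬ ∃ (r : ℕ) (x y : Fin r → ((Fin (2 * n) → ℤ) × (Fin k → ℤ))),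
        (∀ i j, B (x i) (x j) = if i = j then 2 else 0) ∧
        (∀ i j, B (x i) (y j) = if i = j then 1 else 0) ∧
        Finite ((((Fin (2 * n) → ℤ) × (Fin k → ℤ))) ⧸
          Submodule.span ℤ (Set.range x ∪ Set.range y)) := by
  classical
  rintro ⟨r, x, y, hxx, hxy, hfin⟩
  have hx1 : ∀ i, (x i).1 = 0 := by
    intro i
    by_contra h
    have h2 := hxx i i
    rw [hB] at h2
    simp only [if_pos rfl] at h2
    have h4 := hmin _ h
    have hnn : 0 ≤ (x i).2 ⬝ᵥ (x i).2 :=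
      Finset.sum_nonneg (fun a _ => mul_self_nonneg _)
    omega
  have huu : ∀ i j, (x i).2 ⬝ᵥ (x j).2 = if i = j then 2 else 0 := by
    intro i j
    have h2 := hxx i j
    rw [hB, hx1 i] at h2
    simpa using h2
  have huz : ∀ i j, (x i).2 ⬝ᵥ (y j).2 = if i = j then 1 else 0 := by
    intro i j
    have h2 := hxy i j
    rw [hB, hx1 i] at h2
    simpa using h2
  have hrk : r + r ≤ k := key_comb (fun i => (x i).2) (fun j => (y j).2) huu huz
  -- rank bound: 2n + k ≤ r + r
  have hSpan : ∀ w : (Fin (2 * n) → ℤ) × (Fin k → ℤ),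
      castMapAux (2 * n) k w ∈
        Submodule.span ℚ (castMapAux (2 * n) k '' (Set.range x ∪ Set.range y)) := by
    intro w
    obtain ⟨m, hm, hmw⟩ : ∃ m : ℕ, 0 < m ∧
        m • w ∈ Submodule.span ℤ (Set.range x ∪ Set.range y) := by
      have hfo : IsOfFinAddOrder
          ((Submodule.span ℤ (Set.range x ∪ Set.range y)).mkQ w) :=
        isOfFinAddOrder_of_finite _
      obtain ⟨m, hm, hmq⟩ := isOfFinAddOrder_iff_nsmul_eq_zero.mp hfo
      refine ⟨m, hm, ?_⟩
      have : (Submodule.span ℤ (Set.range x ∪ Set.range y)).mkQ (m • w) = 0 := by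
        rw [map_nsmul]; exact hmq
      simpa [Submodule.mkQ_apply, Submodule.Quotient.mk_eq_zero] using this
    have h1 : castMapAux (2 * n) k (m • w) ∈
        Submodule.span ℤ (castMapAux (2 * n) k '' (Set.range x ∪ Set.range y)) := by
      rw [← Submodule.map_span]
      exact Submodule.mem_map_of_mem hmw
    have h2 := Submodule.span_subset_span ℤ ℚ
      (castMapAux (2 * n) k '' (Set.range x ∪ Set.range y)) h1
    have h3 : ((m : ℚ)) • castMapAux (2 * n) k w ∈
        Submodule.span ℚ (castMapAux (2 * n) k '' (Set.range x ∪ Set.range y)) := by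
      have heq : castMapAux (2 * n) k (m • w) = (m : ℚ) • castMapAux (2 * n) k w := by
        rw [map_nsmul, ← Nat.cast_smul_eq_nsmul ℚ]
      rwa [heq] at h2
    have hmne : (m : ℚ) ≠ 0 := Nat.cast_ne_zero.mpr hm.ne'
    have h4 := Submodule.smul_mem
      (Submodule.span ℚ (castMapAux (2 * n) k '' (Set.range x ∪ Set.range y)))
      ((m : ℚ))⁻¹ h3
    rwa [inv_smul_smul₀ hmne] at h4
  have htop : Submodule.span ℚ (castMapAux (2 * n) k '' (Set.range x ∪ Set.range y)) = ⊤ := by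
    refine top_unique ?_
    rw [← ((Pi.basisFun ℚ (Fin (2 * n))).prod (Pi.basisFun ℚ (Fin k))).span_eq]
    refine Submodule.span_le.mpr ?_
    rintro _ ⟨i, rfl⟩
    rcases i with i | i
    · rw [castMapAux_inl]; exact hSpan _
    · rw [castMapAux_inr]; exact hSpan _
  have hrange : Set.range (Sum.elim (fun i => castMapAux (2 * n) k (x i))
        (fun i => castMapAux (2 * n) k (y i)) : Fin r ⊕ Fin r → _)
      = castMapAux (2 * n) k '' (Set.range x ∪ Set.range y) := by
    rw [Set.Sum.elim_range, Set.image_union, ← Set.range_comp, ← Set.range_comp]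
    rfl
  have hfr : Module.finrank ℚ ((Fin (2 * n) → ℚ) × (Fin k → ℚ))
      ≤ Fintype.card (Fin r ⊕ Fin r) :=
    finrank_le_of_span_eq_top (v := Sum.elim (fun i => castMapAux (2 * n) k (x i))
        (fun i => castMapAux (2 * n) k (y i)))
      (by rw [hrange, htop])
  have hdimV : Module.finrank ℚ ((Fin (2 * n) → ℚ) × (Fin k → ℚ)) = 2 * n + k := by
    simp [Module.finrank_prod]
  rw [hdimV] at hfr
  simp only [Fintype.card_sum, Fintype.card_fin] at hfr
  omega
end
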